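/- Let γ = 1 (average-reward case) and suppose e_{t+1} = P'_t e_t where each P'_t is row-stochastic, (P*)^N is entrywise positive, and P*(i,j) > 0 ⟹ P'_t(i,j) ≥ δ' > 0 with n δ'^N < 1. Then span(e_{kN}) ≤ (1 − n δ'^N)^k span(e_0) for all k ≥ 0, so span(e_t) → 0 geometrically. -/

import Mathlib

/-!
Each step `e ↦ P'_t e` averages the entries of `e`, so the span never increases. Over a block
of `N` steps the product `P'_{s+N-1} ⋯ P'_s` has an entry `≥ δ'^N` wherever `P*^N` is positive,
that is, everywhere. A stochastic matrix whose entries are all `≥ ε` is the sum of the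
uniform row `ε 𝟙` and a nonnegative remainder of mass `1 - nε`, so it contracts the
span by the factor `1 - nε` (Doeblin's coefficient).
-/

/-- `span v = max v - min v`. -/
noncomputable def spanv {n : ℕ} (v : Fin n → ℝ) : ℝ :=
  (⨆ i, v i) - (⨅ i, v i)

open Filter Topology Finset Matrix

lemma spanv_of_fin_zero (v : Fin 0 → ℝ) : spanv v = 0 := by
  simp [spanv, Real.iSup_of_isEmpty, Real.iInf_of_isEmpty]

lemma spanv_nonneg {n : ℕ} (v : Fin n → ℝ) : 0 ≤ spanv v := by
  rcases n.eq_zero_or_pos with rfl | hn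
  · rw [spanv_of_fin_zero]
  · exact sub_nonneg.2 ((Finite.ciInf_le v ⟨0, hn⟩).trans (Finite.le_ciSup v ⟨0, hn⟩))

lemma spanv_le_of_mem_Icc {n : ℕ} [Nonempty (Fin n)] {w : Fin n → ℝ} {a b : ℝ}
    (hw : ∀ i, w i ∈ Set.Icc a b) : spanv w ≤ b - a :=
  sub_le_sub (ciSup_le fun i => (hw i).2) (le_ciInf fun i => (hw i).1)

lemma spanv_mulVec_le {n : ℕ} {Q : Matrix (Fin n) (Fin n) ℝ} {ε : ℝ}
    (hQ : ∀ i j, ε ≤ Q i j) (hrow : ∀ i, ∑ j, Q i j = 1) (v : Fin n → ℝ) :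
    spanv (Q *ᵥ v) ≤ (1 - n * ε) * spanv v := by
  rcases n.eq_zero_or_pos with rfl | hn
  · simp [spanv_of_fin_zero]
  have : Nonempty (Fin n) := ⟨⟨0, hn⟩⟩
  set M := ⨆ j, v j
  set m := ⨅ j, v j
  have hsplit : ∀ i, (Q *ᵥ v) i = ε * ∑ k, v k + ∑ k, (Q i k - ε) * v k := fun i => by
    simp only [mulVec, dotProduct, mul_sum, ← sum_add_distrib]
    exact sum_congr rfl fun k _ => by ring
  have hmass : ∀ i, ∑ k, (Q i k - ε) = 1 - n * ε := fun i => by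
    simp [sum_sub_distrib, hrow i]
  have hrange : ∀ i, (Q *ᵥ v) i ∈
      Set.Icc (ε * ∑ k, v k + (1 - n * ε) * m) (ε * ∑ k, v k + (1 - n * ε) * M) := fun i => by
    rw [hsplit i, ← hmass i, sum_mul, sum_mul]
    have hw : ∀ k ∈ univ, 0 ≤ Q i k - ε := fun k _ => sub_nonneg.2 (hQ i k)
    exact ⟨add_le_add_right (sum_le_sum fun k hk => mul_le_mul_of_nonneg_left
        (Finite.ciInf_le v k) (hw k hk)) _,
      add_le_add_right (sum_le_sum fun k hk => mul_le_mul_of_nonneg_left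
        (Finite.le_ciSup v k) (hw k hk)) _⟩
  calc spanv (Q *ᵥ v) ≤ _ := spanv_le_of_mem_Icc hrange
    _ = (1 - n * ε) * spanv v := by simp only [spanv, M, m]; ring

namespace Matrix

variable {ι R : Type*} [Fintype ι] [DecidableEq ι]

def transitionProd [Semiring R] (P : ℕ → Matrix ι ι R) (s : ℕ) : ℕ → Matrix ι ι R
  | 0 => 1
  | m + 1 => P (s + m) * transitionProd P s m

lemma mulVec_transitionProd [Semiring R] {P : ℕ → Matrix ι ι R} {e : ℕ → ι → R}
    (hdyn : ∀ t, e (t + 1) = P t *ᵥ e t) (s m : ℕ) :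
    e (s + m) = transitionProd P s m *ᵥ e s := by
  induction m with
  | zero => simp [transitionProd]
  | succ m ih => rw [← add_assoc, hdyn, ih, transitionProd, mulVec_mulVec]

lemma transitionProd_mem_rowStochastic [Semiring R] [PartialOrder R] [IsOrderedRing R]
    {P : ℕ → Matrix ι ι R} (hP : ∀ t, P t ∈ rowStochastic R ι) (s m : ℕ) :
    transitionProd P s m ∈ rowStochastic R ι := by
  induction m with
  | zero => exact (rowStochastic R ι).one_mem
  | succ m ih => exact (rowStochastic R ι).mul_mem (hP _) ih

lemma pow_le_transitionProd_apply [Semiring R] [LinearOrder R] [IsStrictOrderedRing R]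
    {P : ℕ → Matrix ι ι R} {A : Matrix ι ι R} {δ : R} (hA : ∀ i j, 0 ≤ A i j)
    (hP : ∀ t, P t ∈ rowStochastic R ι) (hδ : 0 ≤ δ) (hdom : ∀ t i j, 0 < A i j → δ ≤ P t i j)
    (s : ℕ) {m : ℕ} {i j : ι} (hij : 0 < (A ^ m) i j) : δ ^ m ≤ transitionProd P s m i j := by
  induction m generalizing i with
  | zero =>
    obtain rfl : i = j := by_contra fun h => by simp [one_apply_ne h] at hij
    simp [transitionProd]
  | succ m ih =>
    rw [pow_succ', mul_apply] at hij
    obtain ⟨k, -, hk⟩ := exists_lt_of_sum_lt (f := fun _ => (0 : R)) (by simpa using hij)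
    have hkj : 0 < (A ^ m) k j := pos_of_mul_pos_right hk (hA i k)
    have hAik : 0 < A i k := pos_of_mul_pos_left hk hkj.le
    have hprod := transitionProd_mem_rowStochastic hP s m
    calc δ ^ (m + 1) = δ * δ ^ m := pow_succ' δ m
      _ ≤ P (s + m) i k * transitionProd P s m k j :=
        mul_le_mul (hdom _ i k hAik) (ih hkj) (pow_nonneg hδ m)
          (nonneg_of_mem_rowStochastic (hP _))
      _ ≤ ∑ l, P (s + m) i l * transitionProd P s m l j :=
        single_le_sum (f := fun l => P (s + m) i l * transitionProd P s m l j)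
          (fun l _ => mul_nonneg (nonneg_of_mem_rowStochastic (hP _))
            (nonneg_of_mem_rowStochastic hprod)) (mem_univ k)
      _ = transitionProd P s (m + 1) i j := (mul_apply ..).symm

end Matrix

theorem average_reward_span_convergence_general (n N : ℕ) (hN : 1 ≤ N)
    (P' : ℕ → Matrix (Fin n) (Fin n) ℝ)
    (Pstar : Matrix (Fin n) (Fin n) ℝ)
    (hPnonneg : ∀ t i j, 0 ≤ P' t i j)
    (hProw : ∀ t i, ∑ j, P' t i j = 1)
    (hSnonneg : ∀ i j, 0 ≤ Pstar i j)
    (hpos : ∀ i j, 0 < (Pstar ^ N) i j)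
    (δ' : ℝ) (hδ : 0 < δ')
    (hdom : ∀ t i j, 0 < Pstar i j → δ' ≤ P' t i j)
    (hnδ : (n : ℝ) * δ' ^ N < 1)
    (e : ℕ → Fin n → ℝ)
    (hdyn : ∀ t, e (t + 1) = (P' t).mulVec (e t)) :
    (∀ k : ℕ, spanv (e (k * N)) ≤ (1 - (n : ℝ) * δ' ^ N) ^ k * spanv (e 0)) ∧
      Filter.Tendsto (fun t => spanv (e t)) Filter.atTop (nhds 0) := by
  have hP t : P' t ∈ rowStochastic ℝ (Fin n) :=
    mem_rowStochastic_iff_sum.2 ⟨hPnonneg t, hProw t⟩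
  set β := 1 - (n : ℝ) * δ' ^ N
  have hblock s : spanv (e (s + N)) ≤ β * spanv (e s) := by
    rw [mulVec_transitionProd hdyn]
    exact spanv_mulVec_le
      (fun i j => pow_le_transitionProd_apply hSnonneg hP hδ.le hdom s (hpos i j))
      (sum_row_of_mem_rowStochastic (transitionProd_mem_rowStochastic hP s N)) _
  have hgeom k : spanv (e (k * N)) ≤ β ^ k * spanv (e 0) := by
    simpa using le_geom (u := fun k => spanv (e (k * N))) (by linarith) k
      fun k _ => by simpa [add_mul] using hblock (k * N)
  refine ⟨hgeom, ?_⟩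
  rcases n.eq_zero_or_pos with rfl | hn
  · simp [spanv_of_fin_zero]
  have hanti : Antitone fun t => spanv (e t) := antitone_nat_of_succ_le fun t => by
    simpa [hdyn] using spanv_mulVec_le (ε := 0) (hPnonneg t) (hProw t) (e t)
  have hβ : β < 1 := by have := mul_pos (Nat.cast_pos.2 hn) (pow_pos hδ N); linarith
  rw [tendsto_iff_tendsto_subseq_of_antitone hanti
    (tendsto_atTop_mono (fun k => Nat.le_mul_of_pos_right k hN) tendsto_id)]
  refine squeeze_zero (fun k => spanv_nonneg _) hgeom ?_
  simpa using (tendsto_pow_atTop_nhds_zero_of_lt_one (by linarith) hβ).mul_const (spanv (e 0))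

/-- Average-reward case (`γ = 1`): with `e_{t+1} = P'_t e_t`, `(P*)^N` entrywise
positive, and `P*(i,j) > 0 → P'_t(i,j) ≥ δ'`, one has
`span e_{kN} ≤ (1 - n δ'^N)^k span e₀`, so `span e_t → 0`. -/
theorem average_reward_span_convergence (n N : ℕ) (hN : 1 ≤ N)
    (P' : ℕ → Matrix (Fin n) (Fin n) ℝ)
    (Pstar : Matrix (Fin n) (Fin n) ℝ)
    (hPnonneg : ∀ t i j, 0 ≤ P' t i j)
    (hProw : ∀ t i, ∑ j, P' t i j = 1)
    (hSnonneg : ∀ i j, 0 ≤ Pstar i j)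
    (hSrow : ∀ i, ∑ j, Pstar i j = 1)
    (hpos : ∀ i j, 0 < (Pstar ^ N) i j)
    (δ' : ℝ) (hδ : 0 < δ')
    (hdom : ∀ t i j, 0 < Pstar i j → δ' ≤ P' t i j)
    (hnδ : (n : ℝ) * δ' ^ N < 1)
    (e : ℕ → Fin n → ℝ)
    (hdyn : ∀ t, e (t + 1) = (P' t).mulVec (e t)) :
    (∀ k : ℕ, spanv (e (k * N)) ≤ (1 - (n : ℝ) * δ' ^ N) ^ k * spanv (e 0)) ∧
      Filter.Tendsto (fun t => spanv (e t)) Filter.atTop (nhds 0) :=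
  average_reward_span_convergence_general n N hN P' Pstar hPnonneg hProw hSnonneg hpos δ' hδ hdom
    hnδ e hdyn
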